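/- arXiv:2408.00339 — 6 statements merged into one kernel-verified Lean document; each statement's English description precedes it below -/
import Mathlib

section
/- Let N be a measurable space, f : N → N a bijection such that f and f⁻¹ are measurable, and p : N → (0,1) a measurable function. Let Ω⁺ = {−1,+1}^ℕ with its product σ-algebra and left shift σ, and let (ζ_x)_{x∈N} be a family of probability measures on Ω⁺ such that x ↦ ζ_x(B) is measurable for each measurable B and such that for every x ∈ N and every measurable B ⊆ Ω⁺: ζ_x({η : η₀ = +1 and ση ∈ B}) = p(x)·ζ_{f(x)}(B) and ζ_x({η : η₀ = −1 and ση ∈ B}) = (1−p(x))·ζ_{f⁻¹(x)}(B). Define the skew product G : Ω⁺ × N → Ω⁺ × N by G(η,x) = (ση, f^{η₀}(x)), and for a probability measure m on N define the measure μ_m on Ω⁺ × N by μ_m(A) = ∫_N ζ_x({η : (η,x) ∈ A}) dm(x). Then m is stationary — i.e. m(I) = ∫_{f⁻¹(I)} p(x) dm(x) + ∫_{f(I)} (1−p(x)) dm(x) for every measurable I ⊆ N — if and only if μ_m is G-invariant, i.e. μ_m(G⁻¹(A)) = μ_m(A) for every measurable A ⊆ Ω⁺ × N. -/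
open MeasureTheory ENNReal

noncomputable section

/-- The left shift on one-sided binary sequences; `true` encodes the symbol `+1` and
`false` encodes the symbol `−1`. -/
def shiftN (η : ℕ → Bool) : ℕ → Bool := fun n => η (n + 1)

/-- The skew product `G(η, x) = (ση, f^{η₀}(x))` of the random walk along orbits of `f`. -/
def walkSkew {N : Type*} [MeasurableSpace N] (f : N ≃ᵐ N) : ((ℕ → Bool) × N) → ((ℕ → Bool) × N) :=
  fun q => (shiftN q.1, if q.1 0 = true then f q.2 else f.symm q.2)

/-- The measure `μ_m(A) = ∫_N ζ_x {η : (η,x) ∈ A} dm(x)` on `Ω⁺ × N`. -/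
noncomputable def walkMeasure {N : Type*} [MeasurableSpace N]
    (ζ : N → Measure (ℕ → Bool)) (m : Measure N) : Measure ((ℕ → Bool) × N) :=
  m.bind fun x => (ζ x).map fun η => (η, x)

lemma measurable_shiftN : Measurable shiftN :=
  measurable_pi_lambda _ fun n => measurable_pi_apply (n + 1)

lemma measurable_walkSkew {N : Type*} [MeasurableSpace N] (f : N ≃ᵐ N) :
    Measurable (walkSkew f) := by
  apply Measurable.prod
  · exact measurable_shiftN.comp measurable_fst
  · have hc : Measurable fun q : ((ℕ → Bool) × N) => q.1 0 :=
      (measurable_pi_apply 0).comp measurable_fst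
    exact Measurable.ite (hc (measurableSet_singleton true))
      (f.measurable.comp measurable_snd) (f.symm.measurable.comp measurable_snd)

section aux

variable {N : Type*} [MeasurableSpace N] {ζ : N → Measure (ℕ → Bool)}

/-- Measurability of sections under the kernel `ζ`. -/
lemma measurable_zeta_section (hζprob : ∀ x, IsProbabilityMeasure (ζ x))
    (hζ : Measurable ζ) {A : Set ((ℕ → Bool) × N)} (hA : MeasurableSet A) :
    Measurable fun x => ζ x {η | (η, x) ∈ A} := by
  let κ : ProbabilityTheory.Kernel N (ℕ → Bool) := ⟨ζ, hζ⟩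
  have : ProbabilityTheory.IsMarkovKernel κ := ⟨fun x => hζprob x⟩
  have hA' : MeasurableSet ((fun q : N × (ℕ → Bool) => (q.2, q.1)) ⁻¹' A) :=
    hA.preimage (measurable_snd.prodMk measurable_fst)
  exact ProbabilityTheory.Kernel.measurable_kernel_prodMk_left (κ := κ) hA'

lemma walkMeasure_apply (hζprob : ∀ x, IsProbabilityMeasure (ζ x))
    (hζ : Measurable ζ) (m : Measure N) {A : Set ((ℕ → Bool) × N)} (hA : MeasurableSet A) :
    walkMeasure ζ m A = ∫⁻ x, ζ x {η | (η, x) ∈ A} ∂m := by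
  have hmap : Measurable fun x => (ζ x).map fun η => (η, x) := by
    rw [Measure.measurable_measure]
    intro s hs
    have h : ∀ x, ((ζ x).map fun η => (η, x)) s = ζ x {η | (η, x) ∈ s} := fun x =>
      Measure.map_apply measurable_prodMk_right hs
    simp_rw [h]
    exact measurable_zeta_section hζprob hζ hs
  rw [walkMeasure, Measure.bind_apply hA hmap.aemeasurable]
  exact lintegral_congr fun x => Measure.map_apply measurable_prodMk_right hA

end aux

/-- For a bimeasurable bijection `f` of `N`, a measurable position
dependent probability `p : N → (0,1)`, and the family `(ζ_x)` of laws of the random walk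
along orbits of `f`, a probability measure `m` is stationary if and only if the measure
`μ_m` is invariant under the skew product `G(η,x) = (ση, f^{η₀}(x))`. -/
theorem stationary_iff_skew_invariant
    {N : Type*} [MeasurableSpace N]
    (f : N ≃ᵐ N)
    (p : N → ℝ≥0∞) (hp : ∀ x, 0 < p x ∧ p x < 1) (hpm : Measurable p)
    (ζ : N → Measure (ℕ → Bool))
    (hζprob : ∀ x, IsProbabilityMeasure (ζ x))
    (hζmeas : ∀ B : Set (ℕ → Bool), MeasurableSet B → Measurable fun x => ζ x B)
    (hζ1 : ∀ (x : N) (B : Set (ℕ → Bool)), MeasurableSet B →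
      ζ x {η | η 0 = true ∧ shiftN η ∈ B} = p x * ζ (f x) B)
    (hζ0 : ∀ (x : N) (B : Set (ℕ → Bool)), MeasurableSet B →
      ζ x {η | η 0 = false ∧ shiftN η ∈ B} = (1 - p x) * ζ (f.symm x) B)
    (m : Measure N) [IsProbabilityMeasure m] :
    (∀ I : Set N, MeasurableSet I →
        m I = ∫⁻ x in ⇑f ⁻¹' I, p x ∂m + ∫⁻ x in ⇑f '' I, 1 - p x ∂m)
      ↔
    (∀ A : Set ((ℕ → Bool) × N), MeasurableSet A →
        walkMeasure ζ m (walkSkew f ⁻¹' A) = walkMeasure ζ m A) := by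
  have hζ : Measurable ζ := Measure.measurable_measure.2 hζmeas
  -- sections of a measurable set are measurable
  have hsec : ∀ {A : Set ((ℕ → Bool) × N)}, MeasurableSet A → ∀ x : N,
      MeasurableSet {η | (η, x) ∈ A} := fun hA x => hA.preimage measurable_prodMk_right
  -- key computation of the fiberwise measure of G⁻¹A
  have hfiber : ∀ {A : Set ((ℕ → Bool) × N)}, MeasurableSet A → ∀ x : N,
      ζ x {η | (η, x) ∈ walkSkew f ⁻¹' A} =
        p x * ζ (f x) {η | (η, f x) ∈ A}
          + (1 - p x) * ζ (f.symm x) {η | (η, f.symm x) ∈ A} := by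
    intro A hA x
    set B₁ : Set (ℕ → Bool) := {η | (η, f x) ∈ A} with hB₁
    set B₂ : Set (ℕ → Bool) := {η | (η, f.symm x) ∈ A} with hB₂
    have hB₁m : MeasurableSet B₁ := hsec hA (f x)
    have hB₂m : MeasurableSet B₂ := hsec hA (f.symm x)
    have hset : {η | (η, x) ∈ walkSkew f ⁻¹' A} =
        {η | η 0 = true ∧ shiftN η ∈ B₁} ∪ {η | η 0 = false ∧ shiftN η ∈ B₂} := by
      ext η
      simp only [Set.mem_preimage, Set.mem_setOf_eq, Set.mem_union, walkSkew]
      cases h : η 0 <;> simp [h, hB₁, hB₂]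
    have hm2 : MeasurableSet {η : ℕ → Bool | η 0 = false ∧ shiftN η ∈ B₂} := by
      have he : {η : ℕ → Bool | η 0 = false ∧ shiftN η ∈ B₂}
          = ((fun η : ℕ → Bool => η 0) ⁻¹' {false}) ∩ shiftN ⁻¹' B₂ := rfl
      rw [he]
      exact ((measurable_pi_apply 0) (measurableSet_singleton false)).inter
        (measurable_shiftN hB₂m)
    have hd : Disjoint {η : ℕ → Bool | η 0 = true ∧ shiftN η ∈ B₁}
        {η : ℕ → Bool | η 0 = false ∧ shiftN η ∈ B₂} := by
      rw [Set.disjoint_left]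
      rintro η ⟨h1, -⟩ ⟨h2, -⟩
      simp [h1] at h2
    rw [hset, measure_union hd hm2, hζ1 x B₁ hB₁m, hζ0 x B₂ hB₂m]
  constructor
  · -- stationary → invariant
    intro hstat A hA
    have hm : m = (m.withDensity p).map f
        + (m.withDensity fun x => 1 - p x).map f.symm := by
      ext I hI
      rw [Measure.add_apply, Measure.map_apply f.measurable hI,
        Measure.map_apply f.symm.measurable hI,
        withDensity_apply _ (hI.preimage f.measurable),
        withDensity_apply _ (hI.preimage f.symm.measurable),
        ← f.image_eq_preimage_symm]
      exact hstat I hI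
    set g : N → ℝ≥0∞ := fun x => ζ x {η | (η, x) ∈ A} with hg
    have hgm : Measurable g := measurable_zeta_section hζprob hζ hA
    have hgf : Measurable fun x => g (f x) := hgm.comp f.measurable
    have hgf' : Measurable fun x => g (f.symm x) := hgm.comp f.symm.measurable
    have hkey : ∫⁻ x, g x ∂m =
        ∫⁻ x, p x * g (f x) ∂m + ∫⁻ x, (1 - p x) * g (f.symm x) ∂m := by
      conv_lhs => rw [hm]
      rw [lintegral_add_measure, lintegral_map hgm f.measurable,
        lintegral_map hgm f.symm.measurable,
        lintegral_withDensity_eq_lintegral_mul _ hpm hgf,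
        lintegral_withDensity_eq_lintegral_mul _ (f := fun x => 1 - p x) (measurable_const.sub hpm) hgf']
      rfl
    rw [walkMeasure_apply hζprob hζ m ((measurable_walkSkew f) hA),
      walkMeasure_apply hζprob hζ m hA]
    have h1 : (∫⁻ x, ζ x {η | (η, x) ∈ walkSkew f ⁻¹' A} ∂m) =
        ∫⁻ x, p x * g (f x) + (1 - p x) * g (f.symm x) ∂m :=
      lintegral_congr fun x => hfiber hA x
    rw [h1, lintegral_add_left (f := fun x => p x * g (f x)) (hpm.mul hgf)]
    exact hkey.symm
  · -- invariant → stationary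
    intro hinv I hI
    set A : Set ((ℕ → Bool) × N) := Set.univ ×ˢ I with hAdef
    have hA : MeasurableSet A := MeasurableSet.univ.prod hI
    have hgA : ∀ x : N, ζ x {η | (η, x) ∈ A} = Set.indicator I (fun _ => 1) x := by
      intro x
      by_cases hx : x ∈ I
      · have he : {η : ℕ → Bool | (η, x) ∈ A} = Set.univ := by ext η; simp [hAdef, hx]
        simp [he, hx, (hζprob x).measure_univ]
      · have he : {η : ℕ → Bool | (η, x) ∈ A} = ∅ := by ext η; simp [hAdef, hx]
        simp [he, hx]
    have h1 : walkMeasure ζ m A = m I := by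
      rw [walkMeasure_apply hζprob hζ m hA]
      simp_rw [hgA]
      rw [lintegral_indicator hI]
      simp
    have h2 : walkMeasure ζ m (walkSkew f ⁻¹' A) =
        ∫⁻ x in ⇑f ⁻¹' I, p x ∂m + ∫⁻ x in ⇑f '' I, 1 - p x ∂m := by
      rw [walkMeasure_apply hζprob hζ m ((measurable_walkSkew f) hA)]
      have he : (∫⁻ x, ζ x {η | (η, x) ∈ walkSkew f ⁻¹' A} ∂m) =
          ∫⁻ x, Set.indicator (⇑f ⁻¹' I) p x
            + Set.indicator (⇑f.symm ⁻¹' I) (fun x => 1 - p x) x ∂m := by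
        refine lintegral_congr fun x => ?_
        rw [hfiber hA x, hgA (f x), hgA (f.symm x)]
        by_cases h1 : f x ∈ I <;> by_cases h2 : f.symm x ∈ I <;>
          simp [h1, h2, Set.indicator_apply]
      rw [he, lintegral_add_left (hpm.indicator (hI.preimage f.measurable)),
        lintegral_indicator (hI.preimage f.measurable),
        lintegral_indicator (hI.preimage f.symm.measurable), f.image_eq_preimage_symm]
    rw [← h1, ← hinv A hA, h2]

end
end

section
/- Let g : 𝕋² → 𝕋² be a minimal homeomorphism of the two-torus 𝕋² = (ℝ/ℤ)² (every forward orbit {gⁿ(x) : n ∈ ℕ} is dense), let μ_{−1}, μ_{+1} be ergodic g-invariant Borel probability measures on 𝕋² that are absolutely continuous with respect to Haar measure, and let φ : 𝕋² → ℝ be a continuous function with ∫ φ dμ_{−1} < 0 < ∫ φ dμ_{+1}. Then there exists a constant c ∈ (0,1) such that the map H_c : 𝕋² × 𝕋 → 𝕋² × 𝕋 defined by H_c(x,t) = (g(x), φ(x) + c + t (mod 1)) is minimal, i.e. every point of 𝕋² × 𝕋 has dense forward orbit under H_c. -/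
open MeasureTheory Set Function

/-!
If `H_c` is not minimal, take a minimal closed invariant set `M` of `H_c`. Its vertical
translation stabiliser is a closed subgroup of `𝕋`; it is not all of `𝕋` (else `M` would be
everything), so it is finite of some order `k`, and `(x, t) ↦ k • t` descends from `M` to a
continuous `v : 𝕋² → 𝕋` with `v ∘ g = k • (φ + c) + v`. For fixed `k`, two such `v` belonging to
different values of `k • c` give eigenfunctions `e(v - v')` of the Koopman operator of `g` with
eigenvalue `≠ 1`, so `e(v)` and `e(v')` are orthogonal in `L²(μ₋)` and therefore at sup distance
`≥ 1` in the separable space `C(𝕋², ℂ)`. Hence only countably many `c` are exceptional.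
-/

section ClosedInvariant

variable {Y : Type*} [TopologicalSpace Y] {F : Y → Y}

def IsNonemptyClosedInvariant (F : Y → Y) (K : Set Y) : Prop :=
  K.Nonempty ∧ IsClosed K ∧ MapsTo F K K

theorem IsNonemptyClosedInvariant.exists_minimal [CompactSpace Y] {K₀ : Set Y}
    (hK₀ : IsNonemptyClosedInvariant F K₀) :
    ∃ M ⊆ K₀, Minimal (IsNonemptyClosedInvariant F) M := by
  refine zorn_superset_nonempty {K | IsNonemptyClosedInvariant F K}
    (fun c hcS hchain ⟨K, hK⟩ => ?_) K₀ hK₀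
  have : Nonempty c := ⟨⟨K, hK⟩⟩
  refine ⟨⋂₀ c, ⟨?_, isClosed_sInter fun K hK => (hcS hK).2.1, ?_⟩,
    fun K hK => sInter_subset_of_mem hK⟩
  · exact IsCompact.nonempty_sInter_of_directed_nonempty_isCompact_isClosed
      (fun a ha b hb => (hchain.total ha hb).elim (fun h => ⟨a, ha, le_rfl, h⟩)
        fun h => ⟨b, hb, h, le_rfl⟩) (fun K hK => (hcS hK).1)
      (fun K hK => (hcS hK).2.1.isCompact) (fun K hK => (hcS hK).2.1)
  · exact fun y hy => mem_sInter.2 fun K hK => (hcS hK).2.2 (mem_sInter.1 hy K hK)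

theorem isNonemptyClosedInvariant_closure_orbit (hF : Continuous F) (y : Y) :
    IsNonemptyClosedInvariant F (closure (range fun n => F^[n] y)) := by
  refine ⟨⟨y, subset_closure ⟨0, rfl⟩⟩, isClosed_closure, MapsTo.closure ?_ hF⟩
  rintro _ ⟨n, rfl⟩
  exact ⟨n + 1, iterate_succ_apply' F n y⟩

theorem IsNonemptyClosedInvariant.eq_univ (hF : ∀ y, Dense (range fun n => F^[n] y))
    {K : Set Y} (hK : IsNonemptyClosedInvariant F K) : K = univ := by
  obtain ⟨⟨y, hy⟩, hKc, hKF⟩ := hK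
  have horbit : range (fun n => F^[n] y) ⊆ K := by
    rintro _ ⟨n, rfl⟩
    exact hKF.iterate n hy
  exact eq_univ_of_univ_subset ((hF y).closure_eq ▸ closure_minimal horbit hKc)

end ClosedInvariant

theorem exists_continuous_eq_on_of_isCompact {X Y Z : Type*} [TopologicalSpace X] [T2Space X]
    [TopologicalSpace Y] [TopologicalSpace Z] {M : Set (X × Y)} (hM : IsCompact M)
    (hfst : ∀ x, ∃ y, (x, y) ∈ M) {f : X × Y → Z} (hf : Continuous f)
    (hfib : ∀ x y y', (x, y) ∈ M → (x, y') ∈ M → f (x, y) = f (x, y')) :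
    ∃ v : X → Z, Continuous v ∧ ∀ q ∈ M, v q.1 = f q := by
  choose s hs using hfst
  have hv : ∀ q ∈ M, f (q.1, s q.1) = f q := fun q hq => hfib _ _ _ (hs q.1) hq
  have : CompactSpace M := isCompact_iff_compactSpace.1 hM
  have hπ : Topology.IsQuotientMap fun m : M => m.1.1 :=
    .of_surjective_continuous (fun x => ⟨⟨(x, s x), hs x⟩, rfl⟩) (by fun_prop)
  refine ⟨fun x => f (x, s x), hπ.continuous_iff.2 ?_, hv⟩
  have hcomp : ((fun x => f (x, s x)) ∘ fun m : M => m.1.1) = fun m => f m.1 :=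
    funext fun m => hv m.1 m.2
  rw [hcomp]
  fun_prop

theorem AddCircle.eq_univ_or_exists_nsmul_eq_zero {p : ℝ} [Fact (0 < p)]
    (A : AddSubgroup (AddCircle p)) (hA : IsClosed (A : Set (AddCircle p))) :
    (A : Set (AddCircle p)) = univ ∨ ∃ n ≠ 0, ∀ s ∈ A, n • s = 0 := by
  by_cases hdense : Dense (A : Set (AddCircle p))
  · exact .inl (hA.closure_eq ▸ hdense.closure_eq)
  right
  obtain ⟨a, ha, rfl⟩ : ∃ a, addOrderOf a ≠ 0 ∧ A = .zmultiples a := by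
    simpa [AddCircle.dense_addSubgroup_iff_ne_zmultiples] using hdense
  refine ⟨addOrderOf a, ha, ?_⟩
  rintro _ ⟨k, rfl⟩
  simp only [smul_comm (addOrderOf a) k a, addOrderOf_nsmul_eq_zero, smul_zero]

theorem Set.Countable.preimage_coe_addCircle {p : ℝ} {t : Set (AddCircle p)}
    (ht : t.Countable) : (((↑) : ℝ → AddCircle p) ⁻¹' t).Countable := by
  rw [← biUnion_preimage_singleton]
  refine ht.biUnion fun s _ => ?_
  obtain ⟨r, rfl⟩ := QuotientAddGroup.mk_surjective s
  refine (countable_range fun n : ℤ => r + n • p).mono fun x hx => ?_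
  have hxr : ((x - r : ℝ) : AddCircle p) = 0 := sub_eq_zero.2 hx
  obtain ⟨n, hn⟩ := (AddCircle.coe_eq_zero_iff p).1 hxr
  exact ⟨n, by simp only at hn ⊢; linarith⟩

theorem Set.Countable.preimage_nsmul_coe_addCircle {p : ℝ} {t : Set (AddCircle p)}
    (ht : t.Countable) {n : ℕ} (hn : n ≠ 0) :
    ((fun c : ℝ => n • (c : AddCircle p)) ⁻¹' t).Countable := by
  have hcomp : (fun c : ℝ => n • (c : AddCircle p)) = ((↑) : ℝ → AddCircle p) ∘ (n • ·) :=
    funext fun c => (AddCircle.coe_nsmul p).symm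
  rw [hcomp, preimage_comp]
  exact ht.preimage_coe_addCircle.preimage (smul_right_injective ℝ hn)

section SkewProduct

variable {X : Type*}

def skewProduct (g : X → X) (α : X → UnitAddCircle) (q : X × UnitAddCircle) :
    X × UnitAddCircle :=
  (g q.1, α q.1 + q.2)

def fiberShifts (M : Set (X × UnitAddCircle)) : AddSubmonoid UnitAddCircle where
  carrier := {s | ∀ q ∈ M, (q.1, q.2 + s) ∈ M}
  zero_mem' := by simp
  add_mem' ha hb q hq := by simpa [add_assoc] using hb _ (ha q hq)

variable {g : X → X} {α : X → UnitAddCircle} {M : Set (X × UnitAddCircle)}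

theorem skewProduct_shift (q : X × UnitAddCircle) (s : UnitAddCircle) :
    skewProduct g α (q.1, q.2 + s) = ((skewProduct g α q).1, (skewProduct g α q).2 + s) := by
  simp [skewProduct, add_assoc]

variable [TopologicalSpace X]

theorem continuous_skewProduct (hg : Continuous g) (hα : Continuous α) :
    Continuous (skewProduct g α) := by
  unfold skewProduct
  fun_prop

theorem isClosed_fiberShifts (hM : IsClosed M) :
    IsClosed (fiberShifts M : Set UnitAddCircle) := by
  have : (fiberShifts M : Set UnitAddCircle) = ⋂ q ∈ M, (fun s => (q.1, q.2 + s)) ⁻¹' M := by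
    ext; simp [fiberShifts]
  rw [this]
  exact isClosed_biInter fun q _ => hM.preimage (by fun_prop)

section Minimal

variable (hM : Minimal (IsNonemptyClosedInvariant (skewProduct g α)) M)
include hM

theorem mem_fiberShifts_of_minimal {q : X × UnitAddCircle} {s : UnitAddCircle} (hq : q ∈ M)
    (hqs : (q.1, q.2 + s) ∈ M) : s ∈ fiberShifts M := by
  obtain ⟨-, hMc, hMF⟩ := hM.prop
  -- the points of `M` whose `s`-translate stays in `M`: by minimality, all of `M`
  set K := M ∩ {p | (p.1, p.2 + s) ∈ M}
  have hK : IsNonemptyClosedInvariant (skewProduct g α) K :=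
    ⟨⟨q, hq, hqs⟩, hMc.inter (hMc.preimage (by fun_prop)),
      fun p hp => ⟨hMF hp.1, by rw [mem_ofPred_eq, ← skewProduct_shift]; exact hMF hp.2⟩⟩
  exact fun p hp => ((hM.eq_of_le hK inter_subset_left).symm ▸ hp : p ∈ K).2

theorem fiberShifts_eq_univ_or_exists_nsmul_eq_zero :
    (fiberShifts M : Set UnitAddCircle) = univ ∨ ∃ n ≠ 0, ∀ s ∈ fiberShifts M, n • s = 0 :=
  AddCircle.eq_univ_or_exists_nsmul_eq_zero
    { fiberShifts M with
      neg_mem' := fun {s} hs => by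
        obtain ⟨q, hq⟩ := hM.prop.1
        exact mem_fiberShifts_of_minimal hM (hs q hq) (by simpa using hq) }
    (isClosed_fiberShifts hM.prop.2.1)

end Minimal

theorem exists_coboundary_of_not_dense_orbit [CompactSpace X] [T2Space X] (hg : Continuous g)
    (hgmin : ∀ x, Dense (range fun n => g^[n] x)) (hα : Continuous α) {z : X × UnitAddCircle}
    (hz : ¬ Dense (range fun n => (skewProduct g α)^[n] z)) :
    ∃ n : ℕ, n ≠ 0 ∧ ∃ v : X → UnitAddCircle, Continuous v ∧ ∀ x, v (g x) = n • α x + v x := by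
  obtain ⟨M, hMz, hM⟩ :=
    (isNonemptyClosedInvariant_closure_orbit (continuous_skewProduct hg hα) z).exists_minimal
  obtain ⟨hMne, hMc, hMF⟩ := hM.prop
  have hfst : ∀ x, ∃ t, (x, t) ∈ M := by
    have hfst : Prod.fst '' M = univ := IsNonemptyClosedInvariant.eq_univ hgmin
      ⟨hMne.image _, (hMc.isCompact.image continuous_fst).isClosed,
        fun _ ⟨q, hq, hx⟩ => hx ▸ ⟨_, hMF hq, rfl⟩⟩
    intro x
    obtain ⟨q, hq, rfl⟩ := hfst.symm ▸ mem_univ x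
    exact ⟨q.2, hq⟩
  rcases fiberShifts_eq_univ_or_exists_nsmul_eq_zero hM with hA | ⟨n, hn, hA⟩
  · refine absurd (dense_iff_closure_eq.2 (eq_univ_of_univ_subset (subset_trans ?_ hMz))) hz
    intro q _
    obtain ⟨t, ht⟩ := hfst q.1
    have hqt : q.2 - t ∈ (fiberShifts M : Set UnitAddCircle) := hA ▸ mem_univ _
    simpa using hqt _ ht
  · obtain ⟨v, hv, hvM⟩ := exists_continuous_eq_on_of_isCompact hMc.isCompact hfst
      (f := fun q => n • q.2) (by fun_prop) fun x t t' ht ht' => by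
        rw [← sub_eq_zero, ← nsmul_sub]
        exact hA _ (mem_fiberShifts_of_minimal hM ht' (by simpa using ht))
    refine ⟨n, hn, v, hv, fun x => ?_⟩
    obtain ⟨t, ht⟩ := hfst x
    rw [hvM (g x, α x + t) (hMF ht), hvM _ ht]
    exact nsmul_add _ _ _

end SkewProduct

namespace MeasureTheory.MeasurePreserving

variable {X : Type*} [MeasurableSpace X] {μ : Measure X} {g : X → X}

theorem integral_eq_zero_of_comp_eq_mul {𝕜 : Type*} [RCLike 𝕜] (hg : MeasurePreserving g μ μ)
    {f : X → 𝕜} (hf : AEStronglyMeasurable f μ) {c : 𝕜} (hc : c ≠ 1)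
    (hfg : ∀ x, f (g x) = c * f x) : ∫ x, f x ∂μ = 0 := by
  have h : ∫ x, f x ∂μ = c * ∫ x, f x ∂μ :=
    calc ∫ x, f x ∂μ = ∫ x, f (g x) ∂μ := by
          rw [← integral_map hg.aemeasurable (by rwa [hg.map_eq]), hg.map_eq]
      _ = c * ∫ x, f x ∂μ := by simp_rw [hfg, integral_const_mul]
  have h' : (1 - c) * ∫ x, f x ∂μ = 0 := by linear_combination h
  exact (mul_eq_zero.1 h').resolve_left (sub_ne_zero.2 hc.symm)

theorem one_le_of_forall_norm_toCircle_sub_one_le [IsProbabilityMeasure μ]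
    (hg : MeasurePreserving g μ μ)
    {w : X → UnitAddCircle} (hw : Measurable w) {s : UnitAddCircle} (hs : s ≠ 0)
    (hwg : ∀ x, w (g x) = w x + s) {B : ℝ}
    (hB : ∀ x, ‖(AddCircle.toCircle (w x) : ℂ) - 1‖ ≤ B) : 1 ≤ B := by
  set f : X → ℂ := fun x => AddCircle.toCircle (w x)
  have hfm : AEStronglyMeasurable f μ :=
    ((by fun_prop : Continuous fun t : UnitAddCircle => (AddCircle.toCircle t : ℂ)).measurable
      |>.comp hw).aestronglyMeasurable
  have hs' : (AddCircle.toCircle s : ℂ) ≠ 1 := fun h => hs <|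
    AddCircle.injective_toCircle one_ne_zero <| by
      rw [AddCircle.toCircle_zero]; exact Circle.coe_eq_one.1 h
  have hf0 : ∫ x, f x ∂μ = 0 := hg.integral_eq_zero_of_comp_eq_mul hfm hs' fun x => by
    simp [f, hwg, AddCircle.toCircle_add, mul_comm]
  have hint : Integrable f μ := .of_bound hfm 1 (ae_of_all _ fun x => (Circle.norm_coe _).le)
  calc 1 = ‖∫ x, (f x - 1) ∂μ‖ := by rw [integral_sub hint (integrable_const 1), hf0]; simp
    _ ≤ B * μ.real univ := norm_integral_le_of_norm_le_const (ae_of_all _ hB)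
    _ = B := by simp

end MeasureTheory.MeasurePreserving

section Coboundary

variable {X : Type*} [TopologicalSpace X]

def coboundaryShifts (g : X → X) (β : X → UnitAddCircle) : Set UnitAddCircle :=
  {s | ∃ v : X → UnitAddCircle, Continuous v ∧ ∀ x, v (g x) = β x + s + v x}

theorem countable_coboundaryShifts [CompactSpace X] [T2Space X] [SecondCountableTopology X]
    [MeasurableSpace X] [OpensMeasurableSpace X] {μ : Measure X} [IsProbabilityMeasure μ]
    {g : X → X} (hg : MeasurePreserving g μ μ) (β : X → UnitAddCircle) :
    (coboundaryShifts g β).Countable := by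
  choose v hv hvg using fun s : coboundaryShifts g β => s.2
  let F : coboundaryShifts g β → C(X, ℂ) :=
    fun s => ⟨fun x => AddCircle.toCircle (v s x), by fun_prop⟩
  have hsep : ∀ s s', s ≠ s' → 1 ≤ dist (F s) (F s') := by
    intro s s' hss'
    refine hg.one_le_of_forall_norm_toCircle_sub_one_le ((hv s).sub (hv s')).measurable
      (sub_ne_zero.2 (Subtype.coe_ne_coe.2 hss'))
      (fun x => by simp only [Pi.sub_apply, hvg]; abel) fun x => ?_
    have hfac : (AddCircle.toCircle (v s x) : ℂ) - AddCircle.toCircle (v s' x) =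
        ((AddCircle.toCircle (v s x - v s' x) : ℂ) - 1) * AddCircle.toCircle (v s' x) := by
      rw [sub_mul, one_mul, ← Circle.coe_mul, ← AddCircle.toCircle_add, sub_add_cancel]
    calc ‖(AddCircle.toCircle ((v s - v s') x) : ℂ) - 1‖ = ‖F s x - F s' x‖ := by
          simp [F, hfac, Circle.norm_coe]
      _ ≤ dist (F s) (F s') :=
          dist_eq_norm (F s x) (F s' x) ▸ ContinuousMap.dist_apply_le_dist x
  have : Countable (coboundaryShifts g β) :=
    Pairwise.countable_of_isOpen_disjoint (s := fun s => Metric.ball (F s) (1 / 2))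
      (fun s s' h => Metric.ball_disjoint_ball (by linarith [hsep s s' h]))
      (fun _ => Metric.isOpen_ball) fun s => ⟨F s, Metric.mem_ball_self (by norm_num)⟩
  exact countable_coe_iff.1 this

end Coboundary

theorem exists_c_skew_product_minimal_general
    (g : (AddCircle (1:ℝ) × AddCircle (1:ℝ)) ≃ₜ (AddCircle (1:ℝ) × AddCircle (1:ℝ)))
    (hgmin : ∀ z : AddCircle (1:ℝ) × AddCircle (1:ℝ),
      Dense (Set.range fun n : ℕ => (⇑g)^[n] z))
    (μm : Measure (AddCircle (1:ℝ) × AddCircle (1:ℝ)))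
    [IsProbabilityMeasure μm]
    (hem : Ergodic (⇑g) μm)
    (φ : AddCircle (1:ℝ) × AddCircle (1:ℝ) → ℝ) (hφ : Continuous φ) :
    ∃ c ∈ Set.Ioo (0:ℝ) 1,
      ∀ z : (AddCircle (1:ℝ) × AddCircle (1:ℝ)) × AddCircle (1:ℝ),
        Dense (Set.range fun n : ℕ =>
          (fun q : (AddCircle (1:ℝ) × AddCircle (1:ℝ)) × AddCircle (1:ℝ) =>
            (g q.1, ((φ q.1 + c : ℝ) : AddCircle (1:ℝ)) + q.2))^[n] z) := by
  by_contra! h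
  have hcover : Ioo (0 : ℝ) 1 ⊆ ⋃ (k : ℕ) (_ : k ≠ 0),
      (fun c : ℝ => k • (c : UnitAddCircle)) ⁻¹'
        coboundaryShifts g (fun y => k • (φ y : UnitAddCircle)) := by
    intro c hc
    obtain ⟨z, hz⟩ := h c hc
    obtain ⟨k, hk, v, hv, hvg⟩ := exists_coboundary_of_not_dense_orbit
      (α := fun y => ((φ y + c : ℝ) : UnitAddCircle)) g.continuous hgmin (by fun_prop) hz
    exact mem_iUnion₂.2 ⟨k, hk, v, hv, fun y => by rw [hvg, AddCircle.coe_add, nsmul_add]⟩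
  refine (Cardinal.Real.Ioo_countable_iff.not.2 (by norm_num)) ((countable_iUnion fun k =>
    countable_iUnion fun hk => ?_).mono hcover)
  exact (countable_coboundaryShifts hem.toMeasurePreserving _).preimage_nsmul_coe_addCircle hk

/-- For a minimal homeomorphism `g` of `𝕋²` admitting two ergodic
absolutely continuous invariant probability measures `μ₋, μ₊`, and a continuous
`φ : 𝕋² → ℝ` with `∫ φ dμ₋ < 0 < ∫ φ dμ₊`, there is `c ∈ (0,1)` such that
`H_c(x,t) = (g x, φ(x) + c + t mod 1)` is minimal on `𝕋² × 𝕋`. -/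
theorem exists_c_skew_product_minimal
    (g : (AddCircle (1:ℝ) × AddCircle (1:ℝ)) ≃ₜ (AddCircle (1:ℝ) × AddCircle (1:ℝ)))
    (hgmin : ∀ z : AddCircle (1:ℝ) × AddCircle (1:ℝ),
      Dense (Set.range fun n : ℕ => (⇑g)^[n] z))
    (μm μp : Measure (AddCircle (1:ℝ) × AddCircle (1:ℝ)))
    [IsProbabilityMeasure μm] [IsProbabilityMeasure μp]
    (hem : Ergodic (⇑g) μm) (hep : Ergodic (⇑g) μp)
    (hacm : μm ≪ (volume : Measure (AddCircle (1:ℝ) × AddCircle (1:ℝ))))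
    (hacp : μp ≪ (volume : Measure (AddCircle (1:ℝ) × AddCircle (1:ℝ))))
    (φ : AddCircle (1:ℝ) × AddCircle (1:ℝ) → ℝ) (hφ : Continuous φ)
    (hneg : ∫ z, φ z ∂μm < 0) (hpos : 0 < ∫ z, φ z ∂μp) :
    ∃ c ∈ Set.Ioo (0:ℝ) 1,
      ∀ z : (AddCircle (1:ℝ) × AddCircle (1:ℝ)) × AddCircle (1:ℝ),
        Dense (Set.range fun n : ℕ =>
          (fun q : (AddCircle (1:ℝ) × AddCircle (1:ℝ)) × AddCircle (1:ℝ) =>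
            (g q.1, ((φ q.1 + c : ℝ) : AddCircle (1:ℝ)) + q.2))^[n] z) :=
  exists_c_skew_product_minimal_general g hgmin μm hem φ hφ
end

section
/- Let (n_i)_{i∈ℕ} be a sequence of natural numbers and (a_i)_{i∈ℕ} a sequence of points of 𝕋 = ℝ/ℤ. For c ∈ ℝ let Θ(c) ⊆ 𝕋 be the closure of the set {a_i + n_i·c (mod 1) : i ∈ ℕ}. Then Θ is lower semicontinuous as a map into the closed subsets of 𝕋: for every c ∈ ℝ and every ε > 0 there exists δ > 0 such that for all c' with |c' − c| < δ, the set Θ(c) is contained in the open ε-neighborhood (ε-thickening) of Θ(c'). -/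
open Filter Topology

lemma addCircle_dist_le (x y : ℝ) :
    dist ((x : AddCircle (1 : ℝ))) ((y : AddCircle (1 : ℝ))) ≤ |x - y| := by
  rw [dist_eq_norm]
  rw [← AddCircle.coe_sub]
  simpa using QuotientAddGroup.norm_mk_le_norm (S := AddSubgroup.zmultiples (1 : ℝ)) (m := x - y)

/-- For sequences `(n_i)` in `ℕ` and `(a_i)` in `𝕋 = ℝ/ℤ`, the map
`c ↦ Θ(c) := closure {a_i + n_i c mod 1}` is lower semicontinuous: for every `c` and
`ε > 0` there is `δ > 0` so that `|c' − c| < δ` implies `Θ(c) ⊆` the open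
`ε`-thickening of `Θ(c')`. -/
theorem closure_orbit_family_lowerSemicontinuous
    (n : ℕ → ℕ) (a : ℕ → AddCircle (1 : ℝ)) (c : ℝ) (ε : ℝ) (hε : 0 < ε) :
    ∃ δ > 0, ∀ c' : ℝ, |c' - c| < δ →
      closure (Set.range fun i : ℕ => a i + (((n i : ℝ) * c : ℝ) : AddCircle (1 : ℝ)))
        ⊆ Metric.thickening ε
          (closure (Set.range fun i : ℕ =>
            a i + (((n i : ℝ) * c' : ℝ) : AddCircle (1 : ℝ)))) := by
  set f : ℝ → ℕ → AddCircle (1 : ℝ) :=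
    fun c' i => a i + (((n i : ℝ) * c' : ℝ) : AddCircle (1 : ℝ)) with hf
  -- compactness: finitely many indices ε/2-cover the closure
  have hcomp : IsCompact (closure (Set.range (f c))) :=
    (isCompact_closedBall (0 : AddCircle (1:ℝ)) 1).of_isClosed_subset isClosed_closure
      (fun x _ => by
        have := AddCircle.norm_le_half_period (p := (1:ℝ)) (x := x) one_ne_zero
        simp only [Metric.mem_closedBall, dist_zero_right]
        rw [abs_one] at this; linarith)
  have hcover : closure (Set.range (f c)) ⊆ ⋃ i : ℕ, Metric.ball (f c i) (ε / 2) := by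
    intro x hx
    have : x ∈ Metric.thickening (ε / 2) (Set.range (f c)) :=
      Metric.closure_subset_thickening (by linarith) _ hx
    rw [Metric.mem_thickening_iff] at this
    obtain ⟨y, ⟨i, rfl⟩, hy⟩ := this
    exact Set.mem_iUnion.2 ⟨i, hy⟩
  obtain ⟨F, hF⟩ := hcomp.elim_finite_subcover _
    (fun i => Metric.isOpen_ball) hcover
  -- choose δ
  set M : ℝ := ((F.sup n : ℕ) : ℝ) + 1 with hM
  have hMpos : 0 < M := by positivity
  refine ⟨ε / (2 * M), by positivity, fun c' hc' x hx => ?_⟩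
  obtain ⟨i, hiF, hxi⟩ := Set.mem_iUnion₂.1 (hF hx)
  have hni : (n i : ℝ) ≤ M := by
    have : n i ≤ F.sup n := Finset.le_sup hiF
    have := (Nat.cast_le (α := ℝ)).2 this
    linarith
  have hdist : dist (f c i) (f c' i) < ε / 2 := by
    have h1 : dist (f c i) (f c' i) =
        dist ((((n i : ℝ) * c : ℝ) : AddCircle (1:ℝ))) ((((n i : ℝ) * c' : ℝ) : AddCircle (1:ℝ))) := by
      simp [hf, dist_add_left]
    rw [h1]
    calc dist ((((n i : ℝ) * c : ℝ) : AddCircle (1:ℝ))) ((((n i : ℝ) * c' : ℝ) : AddCircle (1:ℝ)))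
        ≤ |(n i : ℝ) * c - (n i : ℝ) * c'| := addCircle_dist_le _ _
      _ = (n i : ℝ) * |c' - c| := by
          rw [← mul_sub, abs_mul, Nat.abs_cast, abs_sub_comm]
      _ ≤ M * |c' - c| := by
          apply mul_le_mul_of_nonneg_right hni (abs_nonneg _)
      _ < M * (ε / (2 * M)) := by
          apply mul_lt_mul_of_pos_left hc' hMpos
      _ = ε / 2 := by field_simp
  rw [Metric.mem_thickening_iff]
  refine ⟨f c' i, subset_closure ⟨i, rfl⟩, ?_⟩
  calc dist x (f c' i) ≤ dist x (f c i) + dist (f c i) (f c' i) := dist_triangle _ _ _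
    _ < ε / 2 + ε / 2 := add_lt_add (Metric.mem_ball.1 hxi) hdist
    _ = ε := by ring
end

section
/- Let X be a compact metric space, g : X → X a minimal continuous map (every forward orbit dense), and φ : X → 𝕋 a continuous map into 𝕋 = ℝ/ℤ. Define H : X × 𝕋 → X × 𝕋 by H(x,t) = (g(x), t + φ(x)). If some point of X × 𝕋 has dense forward orbit under H, then H is minimal: every point of X × 𝕋 has dense forward orbit under H. -/
open Filter Topology

section Aux
set_option linter.unusedSectionVars false

variable {X : Type*} [MetricSpace X] [CompactSpace X]
  (g : X → X) (φ : X → AddCircle (1 : ℝ))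

private noncomputable def Hmap : X × AddCircle (1 : ℝ) → X × AddCircle (1 : ℝ) :=
  fun q => (g q.1, q.2 + φ q.1)

private lemma Hmap_iterate_fst (x : X) (t : AddCircle (1 : ℝ)) (n : ℕ) :
    ((Hmap g φ)^[n] (x, t)).1 = g^[n] x := by
  induction n with
  | zero => rfl
  | succ n ih =>
    rw [Function.iterate_succ_apply', Function.iterate_succ_apply']
    simp [Hmap, ih]

private lemma Hmap_iterate_add (x : X) (t s : AddCircle (1 : ℝ)) (n : ℕ) :
    (Hmap g φ)^[n] (x, t + s) =
      (((Hmap g φ)^[n] (x, t)).1, ((Hmap g φ)^[n] (x, t)).2 + s) := by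
  induction n with
  | zero => rfl
  | succ n ih =>
    rw [Function.iterate_succ_apply', Function.iterate_succ_apply', ih]
    simp only [Hmap]
    rw [Prod.mk.injEq]
    exact ⟨rfl, by abel⟩

end Aux

/-- A skew product over a minimal map with circle-rotation fibers is
minimal as soon as one point has a dense forward orbit. -/
theorem skew_rotation_minimal_of_exists_dense_orbit
    {X : Type*} [MetricSpace X] [CompactSpace X]
    (g : X → X) (hg : Continuous g)
    (hmin : ∀ x : X, Dense (Set.range fun n : ℕ => g^[n] x))
    (φ : X → AddCircle (1 : ℝ)) (hφ : Continuous φ)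
    (hsome : ∃ z : X × AddCircle (1 : ℝ),
      Dense (Set.range fun n : ℕ =>
        (fun q : X × AddCircle (1 : ℝ) => (g q.1, q.2 + φ q.1))^[n] z)) :
    ∀ z : X × AddCircle (1 : ℝ),
      Dense (Set.range fun n : ℕ =>
        (fun q : X × AddCircle (1 : ℝ) => (g q.1, q.2 + φ q.1))^[n] z) := by
  set H : X × AddCircle (1 : ℝ) → X × AddCircle (1 : ℝ) := Hmap g φ with hH
  have hHc : Continuous H := (hg.comp continuous_fst).prodMk
    (continuous_snd.add (hφ.comp continuous_fst))
  obtain ⟨z₀, hz₀⟩ := hsome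
  -- every point in the fiber over z₀.1 has a dense orbit
  have fiber_dense : ∀ t : AddCircle (1 : ℝ),
      Dense (Set.range fun n : ℕ => H^[n] (z₀.1, t)) := by
    intro t
    set s : AddCircle (1 : ℝ) := t - z₀.2 with hs
    have hts : t = z₀.2 + s := by rw [hs]; abel
    set R : X × AddCircle (1 : ℝ) → X × AddCircle (1 : ℝ) := fun q => (q.1, q.2 + s) with hR
    have hRsurj : Function.Surjective R := fun q => ⟨(q.1, q.2 - s), by simp [hR]⟩
    have hRc : Continuous R := continuous_fst.prodMk (continuous_snd.add continuous_const)
    have key : (fun n : ℕ => H^[n] (z₀.1, t)) = R ∘ (fun n : ℕ => H^[n] z₀) := by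
      funext n
      simp only [Function.comp_apply, hR, hts]
      exact Hmap_iterate_add g φ z₀.1 z₀.2 s n
    rw [key]
    exact DenseRange.comp (hRsurj.denseRange) hz₀ hRc
  intro z
  set S : Set (X × AddCircle (1 : ℝ)) := closure (Set.range fun n : ℕ => H^[n] z) with hS
  have hScl : IsClosed S := isClosed_closure
  -- S is forward invariant
  have hmaps : Set.MapsTo H S S := by
    have h1 : Set.MapsTo H (Set.range fun n : ℕ => H^[n] z)
        (Set.range fun n : ℕ => H^[n] z) := by
      rintro _ ⟨n, rfl⟩
      exact ⟨n + 1, by simp [Function.iterate_succ_apply']⟩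
    exact h1.closure hHc
  have hmapsIter : ∀ n : ℕ, Set.MapsTo H^[n] S S := fun n =>
    hmaps.iterate n
  -- find a point of S in the fiber over z₀.1
  have hproj : (Prod.fst '' S : Set X) = Set.univ := by
    have hclosed : IsClosed (Prod.fst '' S : Set X) :=
      isClosedMap_fst_of_compactSpace S hScl
    have hdense : Dense (Prod.fst '' S : Set X) := by
      have : (Set.range fun n : ℕ => g^[n] z.1) ⊆ Prod.fst '' S := by
        rintro _ ⟨n, rfl⟩
        exact ⟨H^[n] z, subset_closure ⟨n, rfl⟩,
          by rw [show z = (z.1, z.2) from rfl]; exact Hmap_iterate_fst g φ z.1 z.2 n⟩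
      exact (hmin z.1).mono this
    rw [← hclosed.closure_eq, hdense.closure_eq]
  have hx₀ : z₀.1 ∈ (Prod.fst '' S : Set X) := by rw [hproj]; trivial
  obtain ⟨w, hwS, hw1⟩ := hx₀
  -- orbit of w lies in S and is dense
  have horb : (Set.range fun n : ℕ => H^[n] (z₀.1, w.2)) ⊆ S := by
    rintro _ ⟨n, rfl⟩
    have : (z₀.1, w.2) = w := by rw [← hw1]
    rw [this]
    exact hmapsIter n hwS
  have hSdense : Dense S := (fiber_dense w.2).mono horb
  exact dense_closure.mp hSdense
end

section
/- Let Φ : ℝ × X → X be a continuous flow on a compact metric space X (Φ(0,·) = id and Φ(t+s,·) = Φ(t,·) ∘ Φ(s,·)), and let A ⊆ X be a closed set invariant under the flow: Φ(t, A) = A for every t ∈ ℝ. Then for every z ∈ X, dist(Φ(n, z), A) → 0 as n → ∞ along the natural numbers if and only if dist(Φ(t, z), A) → 0 as t → ∞ along the reals. -/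
open Filter Topology

/-- For a continuous flow on a compact metric space and a closed
flow-invariant set `A`, an orbit converges to `A` along integer times if and only if it
converges to `A` along real times. -/
theorem tendsto_infDist_nat_iff_real
    {X : Type*} [MetricSpace X] [CompactSpace X]
    (Φ : ℝ → X → X)
    (hΦ : Continuous fun q : ℝ × X => Φ q.1 q.2)
    (h0 : Φ 0 = id)
    (hadd : ∀ t s : ℝ, Φ (t + s) = Φ t ∘ Φ s)
    (A : Set X) (hA : IsClosed A) (hinv : ∀ t : ℝ, Φ t '' A = A)
    (z : X) :
    Tendsto (fun n : ℕ => Metric.infDist (Φ n z) A) atTop (𝓝 0) ↔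
      Tendsto (fun t : ℝ => Metric.infDist (Φ t z) A) atTop (𝓝 0) := by
  rcases A.eq_empty_or_nonempty with rfl | hAne
  · simp [Metric.infDist_empty, tendsto_const_nhds]
  constructor
  · -- hard direction
    intro hnat
    -- uniform continuity on [0,1] × X
    have hK : IsCompact ((Set.Icc (0:ℝ) 1) ×ˢ (Set.univ : Set X)) :=
      (isCompact_Icc).prod isCompact_univ
    have hUC : UniformContinuousOn (fun q : ℝ × X => Φ q.1 q.2)
        ((Set.Icc (0:ℝ) 1) ×ˢ (Set.univ : Set X)) :=
      hK.uniformContinuousOn_of_continuous hΦ.continuousOn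
    rw [Metric.tendsto_atTop] at hnat ⊢
    intro ε hε
    obtain ⟨δ, hδ, hδ'⟩ := (Metric.uniformContinuousOn_iff).1 hUC ε hε
    obtain ⟨N, hN⟩ := hnat δ hδ
    refine ⟨(N : ℝ), fun t ht => ?_⟩
    have ht0 : (0:ℝ) ≤ t := le_trans (Nat.cast_nonneg N) ht
    set n := ⌊t⌋₊ with hn
    set s := t - n with hs
    have hs0 : 0 ≤ s := by
      have := Nat.floor_le ht0
      simpa [hs] using this
    have hs1 : s ≤ 1 := by
      have := (Nat.lt_floor_add_one t).le
      have : t - (n:ℝ) ≤ 1 := by linarith [Nat.lt_floor_add_one t]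
      simpa [hs] using this
    have hnN : N ≤ n := Nat.le_floor ht
    have hnd : dist (Metric.infDist (Φ (n:ℝ) z) A) 0 < δ := hN n hnN
    have hinfd : Metric.infDist (Φ (n:ℝ) z) A < δ := by
      have h1 : Metric.infDist (Φ (n:ℝ) z) A = |Metric.infDist (Φ (n:ℝ) z) A| :=
        (abs_of_nonneg (Metric.infDist_nonneg)).symm
      rw [Real.dist_eq, sub_zero] at hnd
      rwa [h1]
    obtain ⟨a, haA, hda⟩ := (Metric.infDist_lt_iff hAne).1 hinfd
    -- Φ t z = Φ s (Φ n z)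
    have hts : Φ t z = Φ s (Φ (n:ℝ) z) := by
      have : t = s + (n:ℝ) := by simp [hs]
      rw [this, hadd]; rfl
    have hsa : Φ s a ∈ A := by
      rw [← hinv s]; exact ⟨a, haA, rfl⟩
    have hclose : dist (Φ s (Φ (n:ℝ) z)) (Φ s a) < ε := by
      have hp : ((s, Φ (n:ℝ) z) : ℝ × X) ∈ (Set.Icc (0:ℝ) 1) ×ˢ (Set.univ : Set X) :=
        ⟨⟨hs0, hs1⟩, trivial⟩
      have hq : ((s, a) : ℝ × X) ∈ (Set.Icc (0:ℝ) 1) ×ˢ (Set.univ : Set X) :=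
        ⟨⟨hs0, hs1⟩, trivial⟩
      have hdpq : dist ((s, Φ (n:ℝ) z) : ℝ × X) ((s, a) : ℝ × X) < δ := by
        rw [Prod.dist_eq]
        simpa using hda
      exact hδ' _ hp _ hq hdpq
    have hfinal : Metric.infDist (Φ t z) A < ε := by
      calc Metric.infDist (Φ t z) A ≤ dist (Φ t z) (Φ s a) :=
            Metric.infDist_le_dist_of_mem hsa
        _ = dist (Φ s (Φ (n:ℝ) z)) (Φ s a) := by rw [hts]
        _ < ε := hclose
    rw [Real.dist_eq, sub_zero, abs_of_nonneg Metric.infDist_nonneg]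
    exact hfinal
  · intro hreal
    exact hreal.comp tendsto_natCast_atTop_atTop
end

section
/- Let 0 < l < r < 1 and let f₀, f₁ : [0,1] → [0,1] be orientation-preserving homeomorphisms fixing 0 and 1 such that: f₁(l) = l, f₁(r) = r, f₁(x) > x for x ∈ (0,l) ∪ (r,1), f₁(x) < x for x ∈ (l,r), and f₀(x) < x for all x ∈ (0,1). Let Σ₂ = {0,1}^ℤ with the product topology and left shift σ, and define the homeomorphism F : Σ₂ × [0,1] → Σ₂ × [0,1] by F(ω,x) = (σω, f_{ω₀}(x)). Set Λ_l = ⋂_{n≥0} Fⁿ(Σ₂ × [0,l]) and Λ_r = ⋂_{n≥0} F^{−n}(Σ₂ × [r,1]). Then every nonempty open subset U of Σ₂ × [0,1] has nonempty intersection with the complement of Λ_l ∪ Λ_r. -/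
open Filter Topology unitInterval

noncomputable section

/-- The left shift on two-sided binary sequences. -/
def shiftZ (ω : ℤ → Bool) : ℤ → Bool := fun i => ω (i + 1)

/-- The skew product `F(ω,x) = (σω, f_{ω₀}(x))` on `Σ₂ × [0,1]`; the symbol `false`
encodes `0` (acting by `f₀`) and `true` encodes `1` (acting by `f₁`). -/
def skewF (f₀ f₁ : unitInterval ≃ₜ unitInterval) :
    (ℤ → Bool) × unitInterval → (ℤ → Bool) × unitInterval :=
  fun q => (shiftZ q.1, if q.1 0 = true then f₁ q.2 else f₀ q.2)

/-- The set `Λ_l = ⋂_{n ≥ 0} Fⁿ(Σ₂ × [0,l])`. -/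
def LambdaL (f₀ f₁ : unitInterval ≃ₜ unitInterval) (l : unitInterval) :
    Set ((ℤ → Bool) × unitInterval) :=
  ⋂ n : ℕ, (skewF f₀ f₁)^[n] '' (Set.univ ×ˢ Set.Icc 0 l)

/-- The set `Λ_r = ⋂_{n ≥ 0} F^{−n}(Σ₂ × [r,1])`. -/
def LambdaR (f₀ f₁ : unitInterval ≃ₜ unitInterval) (r : unitInterval) :
    Set ((ℤ → Bool) × unitInterval) :=
  ⋂ n : ℕ, (skewF f₀ f₁)^[n] ⁻¹' (Set.univ ×ˢ Set.Icc r 1)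

namespace ThickAux

/-- The inverse of the skew product. -/
def skewG (f₀ f₁ : unitInterval ≃ₜ unitInterval) :
    (ℤ → Bool) × unitInterval → (ℤ → Bool) × unitInterval :=
  fun q => (fun i => q.1 (i - 1), if q.1 (-1) = true then f₁.symm q.2 else f₀.symm q.2)

lemma skewG_skewF (f₀ f₁ : unitInterval ≃ₜ unitInterval) :
    Function.LeftInverse (skewG f₀ f₁) (skewF f₀ f₁) := by
  rintro ⟨ω, x⟩
  show ((fun i => shiftZ ω (i - 1), _) : (ℤ → Bool) × unitInterval) = (ω, x)
  refine Prod.ext ?_ ?_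
  · funext i; show ω (i - 1 + 1) = ω i; norm_num
  · show (if shiftZ ω (-1) = true then _ else _) = x
    have h : shiftZ ω (-1) = ω 0 := by show ω (-1 + 1) = ω 0; norm_num
    rw [h]
    by_cases hb : ω 0 = true <;> simp [skewF, hb]

lemma skewF_skewG (f₀ f₁ : unitInterval ≃ₜ unitInterval) :
    Function.RightInverse (skewG f₀ f₁) (skewF f₀ f₁) := by
  rintro ⟨ω, x⟩
  show ((shiftZ fun i => ω (i - 1), _) : (ℤ → Bool) × unitInterval) = (ω, x)
  refine Prod.ext ?_ ?_
  · funext i; show ω (i + 1 - 1) = ω i; norm_num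
  · show (if (fun i => ω (i - 1)) 0 = true then _ else _) = x
    have h : ((fun i : ℤ => ω (i - 1)) 0) = ω (-1) := by norm_num
    rw [h]
    by_cases hb : ω (-1) = true <;> simp [skewG, hb]

/-- Forward fibre orbit. -/
def fwd (f₀ f₁ : unitInterval ≃ₜ unitInterval) (ω : ℤ → Bool) (x : unitInterval) :
    ℕ → unitInterval
  | 0 => x
  | n+1 => if ω n = true then f₁ (fwd f₀ f₁ ω x n) else f₀ (fwd f₀ f₁ ω x n)

/-- Backward fibre orbit. -/
def bwd (f₀ f₁ : unitInterval ≃ₜ unitInterval) (ω : ℤ → Bool) (x : unitInterval) :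
    ℕ → unitInterval
  | 0 => x
  | n+1 => if ω (-(n+1)) = true then f₁.symm (bwd f₀ f₁ ω x n) else f₀.symm (bwd f₀ f₁ ω x n)

lemma iterF (f₀ f₁ : unitInterval ≃ₜ unitInterval) (ω : ℤ → Bool) (x : unitInterval) :
    ∀ n : ℕ, (skewF f₀ f₁)^[n] (ω, x) = (fun i => ω (i + n), fwd f₀ f₁ ω x n) := by
  intro n
  induction n with
  | zero => simp [fwd]
  | succ n ih =>
    rw [Function.iterate_succ_apply', ih]
    refine Prod.ext ?_ ?_
    · funext i
      show ω (i + 1 + n) = ω (i + (n + 1 : ℕ))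
      congr 1; push_cast; ring
    · show (if (fun i : ℤ => ω (i + n)) 0 = true then f₁ _ else f₀ _) = fwd f₀ f₁ ω x (n+1)
      have h : ((fun i : ℤ => ω (i + n)) 0) = ω n := by norm_num
      rw [h]; rfl

lemma iterG (f₀ f₁ : unitInterval ≃ₜ unitInterval) (ω : ℤ → Bool) (x : unitInterval) :
    ∀ n : ℕ, (skewG f₀ f₁)^[n] (ω, x) = (fun i => ω (i - n), bwd f₀ f₁ ω x n) := by
  intro n
  induction n with
  | zero => simp [bwd]
  | succ n ih =>
    rw [Function.iterate_succ_apply', ih]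
    refine Prod.ext ?_ ?_
    · funext i
      show ω (i - 1 - n) = ω (i - (n + 1 : ℕ))
      congr 1; push_cast; ring
    · show (if (fun i : ℤ => ω (i - n)) (-1) = true then f₁.symm _ else f₀.symm _)
        = bwd f₀ f₁ ω x (n+1)
      have h : ((fun i : ℤ => ω (i - n)) (-1)) = ω (-(n+1)) := by
        show ω (-1 - n) = ω (-(n+1)); congr 1; omega
      rw [h]; rfl

lemma mem_image_iterF (f₀ f₁ : unitInterval ≃ₜ unitInterval) (S : Set ((ℤ → Bool) × unitInterval))
    (p : (ℤ → Bool) × unitInterval) (n : ℕ) :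
    p ∈ (skewF f₀ f₁)^[n] '' S ↔ (skewG f₀ f₁)^[n] p ∈ S := by
  constructor
  · rintro ⟨q, hq, rfl⟩
    rwa [(skewG_skewF f₀ f₁).iterate n q]
  · intro h
    exact ⟨(skewG f₀ f₁)^[n] p, h, (skewF_skewG f₀ f₁).iterate n p⟩

lemma symm_strictMono (f : unitInterval ≃ₜ unitInterval) (hsm : StrictMono f) :
    StrictMono f.symm := by
  intro a b hab
  rw [← hsm.lt_iff_lt, f.apply_symm_apply, f.apply_symm_apply]
  exact hab

lemma symm_fix (f : unitInterval ≃ₜ unitInterval) {a : unitInterval} (h : f a = a) :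
    f.symm a = a := by
  conv_lhs => rw [← h]
  exact f.symm_apply_apply a

lemma map_mem_Ioo (f : unitInterval ≃ₜ unitInterval) (hsm : StrictMono f)
    (h0 : f 0 = 0) (h1 : f 1 = 1) {x : unitInterval} (hx0 : 0 < x) (hx1 : x < 1) :
    0 < f x ∧ f x < 1 :=
  ⟨h0 ▸ hsm hx0, h1 ▸ hsm hx1⟩

/-- Eventually the forward `f`-orbit drops below `r`. -/
lemma escape_down (f : unitInterval ≃ₜ unitInterval)
    (hf0 : f 0 = 0) (hfx : ∀ x : unitInterval, 0 < x → x < 1 → f x < x)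
    (y r : unitInterval) (hy : y < 1) (hr : 0 < r) : ∃ k, f^[k] y < r := by
  haveI : Fact ((0:ℝ) ≤ 1) := ⟨zero_le_one⟩
  by_contra h
  push_neg at h
  set a : ℕ → unitInterval := fun k => f^[k] y with ha
  have hstep : ∀ k, a (k+1) = f (a k) := fun k => Function.iterate_succ_apply' f k y
  have hle : ∀ x : unitInterval, x < 1 → f x ≤ x := by
    intro x hx
    rcases eq_or_lt_of_le (unitInterval.nonneg' (t := x)) with h0 | h0
    · rw [← h0, hf0]
    · exact le_of_lt (hfx x h0 hx)
  have ha1 : ∀ k, a k < 1 := by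
    intro k; induction k with
    | zero => exact hy
    | succ k ih => rw [hstep]; exact lt_of_le_of_lt (hle _ ih) ih
  have hbdd : BddBelow (Set.range a) := ⟨0, fun z _ => unitInterval.nonneg'⟩
  set c := sInf (Set.range a) with hc
  have hc_le : ∀ k, c ≤ a k := fun k => csInf_le hbdd ⟨k, rfl⟩
  have hrc : r ≤ c := le_csInf (Set.range_nonempty a) (by rintro z ⟨k, rfl⟩; exact h k)
  have hc1 : c < 1 := lt_of_le_of_lt (hc_le 0) hy
  have hfc : f c < c := hfx c (lt_of_lt_of_le hr hrc) hc1
  have hmem : {x : unitInterval | f x < c} ∈ 𝓝 c :=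
    (isOpen_lt f.continuous continuous_const).mem_nhds hfc
  obtain ⟨u, hcu, hsub⟩ := exists_Ico_subset_of_mem_nhds hmem ⟨1, hc1⟩
  obtain ⟨z, hz, hzu⟩ := exists_lt_of_csInf_lt (Set.range_nonempty a) (hc ▸ hcu)
  obtain ⟨k, rfl⟩ := hz
  have hfk : f (a k) < c := hsub ⟨hc_le k, hzu⟩
  exact absurd ((hstep k) ▸ hc_le (k+1)) (not_le.mpr hfk)

/-- Eventually the forward `g`-orbit rises above `l`. -/
lemma escape_up (g : unitInterval ≃ₜ unitInterval)
    (hg1 : g 1 = 1) (hgx : ∀ x : unitInterval, 0 < x → x < 1 → x < g x)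
    (y l : unitInterval) (hy : 0 < y) (hl : l < 1) : ∃ k, l < g^[k] y := by
  haveI : Fact ((0:ℝ) ≤ 1) := ⟨zero_le_one⟩
  by_contra h
  push_neg at h
  set a : ℕ → unitInterval := fun k => g^[k] y with ha
  have hstep : ∀ k, a (k+1) = g (a k) := fun k => Function.iterate_succ_apply' g k y
  have hge : ∀ x : unitInterval, 0 < x → x ≤ g x := by
    intro x hx
    rcases eq_or_lt_of_le (unitInterval.le_one' (t := x)) with h1 | h1
    · rw [h1, hg1]
    · exact le_of_lt (hgx x hx h1)
  have ha0 : ∀ k, 0 < a k := by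
    intro k; induction k with
    | zero => exact hy
    | succ k ih => rw [hstep]; exact lt_of_lt_of_le ih (hge _ ih)
  have hbdd : BddAbove (Set.range a) := ⟨1, fun z _ => unitInterval.le_one'⟩
  set c := sSup (Set.range a) with hc
  have hc_ge : ∀ k, a k ≤ c := fun k => le_csSup hbdd ⟨k, rfl⟩
  have hcl : c ≤ l := csSup_le (Set.range_nonempty a) (by rintro z ⟨k, rfl⟩; exact h k)
  have hc0 : 0 < c := lt_of_lt_of_le (ha0 0) (hc_ge 0)
  have hgc : c < g c := hgx c hc0 (lt_of_le_of_lt hcl hl)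
  have hmem : {x : unitInterval | c < g x} ∈ 𝓝 c :=
    (isOpen_lt continuous_const g.continuous).mem_nhds hgc
  obtain ⟨u, huc, hsub⟩ := exists_Ioc_subset_of_mem_nhds hmem ⟨0, hc0⟩
  obtain ⟨z, hz, hzu⟩ := exists_lt_of_lt_csSup (Set.range_nonempty a) (hc ▸ huc)
  obtain ⟨k, rfl⟩ := hz
  have hgk : c < g (a k) := hsub ⟨hzu, hc_ge k⟩
  exact absurd ((hstep k) ▸ hc_ge (k+1)) (not_le.mpr hgk)

end ThickAux

open ThickAux

/-- For the skew product `F` of the iterated function system with a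
thick attractor `Λ_l` and thick repeller `Λ_r`, every nonempty open subset of
`Σ₂ × [0,1]` meets the complement of `Λ_l ∪ Λ_r`. -/
theorem complement_of_thick_attractor_repeller_dense
    (f₀ f₁ : unitInterval ≃ₜ unitInterval)
    (hsm₀ : StrictMono f₀) (hsm₁ : StrictMono f₁)
    (h₀0 : f₀ 0 = 0) (h₀1 : f₀ 1 = 1) (h₁0 : f₁ 0 = 0) (h₁1 : f₁ 1 = 1)
    (l r : unitInterval) (hl : 0 < l) (hlr : l < r) (hr : r < 1)
    (h₁l : f₁ l = l) (h₁r : f₁ r = r)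
    (h₁left : ∀ x : unitInterval, 0 < x → x < l → x < f₁ x)
    (h₁right : ∀ x : unitInterval, r < x → x < 1 → x < f₁ x)
    (h₁mid : ∀ x : unitInterval, l < x → x < r → f₁ x < x)
    (h₀x : ∀ x : unitInterval, 0 < x → x < 1 → f₀ x < x) :
    ∀ U : Set ((ℤ → Bool) × unitInterval), IsOpen U → U.Nonempty →
      (U ∩ (LambdaL f₀ f₁ l ∪ LambdaR f₀ f₁ r)ᶜ).Nonempty := by
  intro U hU hne
  obtain ⟨⟨ω, x⟩, hpU⟩ := hne
  -- Extract a basic neighborhood contained in U.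
  have hUn : U ∈ 𝓝 (ω, x) := hU.mem_nhds hpU
  rw [nhds_prod_eq, Filter.mem_prod_iff] at hUn
  obtain ⟨A, hA, B, hB, hAB⟩ := hUn
  rw [nhds_pi] at hA
  obtain ⟨I0, hI0fin, t, ht, htsub⟩ := Filter.mem_pi.mp hA
  -- a bound on the window
  obtain ⟨M₀, hM₀⟩ := (hI0fin.image Int.natAbs).bddAbove
  set M : ℕ := M₀ + 1 with hM
  -- the perturbed symbol sequence
  set ω' : ℤ → Bool := fun i => if i.natAbs < M then ω i else false with hω'
  have hω'I : ∀ i ∈ I0, ω' i = ω i := by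
    intro i hi
    have : i.natAbs ≤ M₀ := hM₀ ⟨i, hi, rfl⟩
    simp only [hω']
    rw [if_pos (by omega)]
  have hω'tail : ∀ i : ℤ, M ≤ i.natAbs → ω' i = false := by
    intro i hi
    simp only [hω']
    rw [if_neg (by omega)]
  have hω'A : ω' ∈ A := htsub fun i hi => by
    rw [hω'I i hi]; exact mem_of_mem_nhds (ht i)
  -- the perturbed point in the fibre
  have h01 : (0 : unitInterval) < 1 := hl.trans (hlr.trans hr)
  obtain ⟨x', hx'B, hx'0, hx'1⟩ :
      ∃ x' : unitInterval, x' ∈ B ∧ 0 < x' ∧ x' < 1 := by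
    rcases eq_or_lt_of_le (unitInterval.nonneg' (t := x)) with h0 | h0
    · -- x = 0
      obtain ⟨u, hu, hsub⟩ := exists_Ico_subset_of_mem_nhds hB ⟨1, h0 ▸ h01⟩
      have h0u : (0 : unitInterval) < u := h0 ▸ hu
      obtain ⟨x', hx'0, hx'⟩ := exists_between (lt_min h0u h01)
      exact ⟨x', hsub ⟨h0 ▸ le_of_lt hx'0, lt_of_lt_of_le hx' (min_le_left _ _)⟩,
        hx'0, lt_of_lt_of_le hx' (min_le_right _ _)⟩
    rcases eq_or_lt_of_le (unitInterval.le_one' (t := x)) with h1 | h1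
    · -- x = 1
      obtain ⟨u, hu, hsub⟩ := exists_Ioc_subset_of_mem_nhds hB ⟨0, h1 ▸ h01⟩
      have hu1 : u < (1 : unitInterval) := h1 ▸ hu
      obtain ⟨x', hx', hx'1⟩ := exists_between (max_lt hu1 h01)
      exact ⟨x', hsub ⟨lt_of_le_of_lt (le_max_left _ _) hx', h1 ▸ le_of_lt hx'1⟩,
        lt_of_le_of_lt (le_max_right _ _) hx', hx'1⟩
    · exact ⟨x, mem_of_mem_nhds hB, h0, h1⟩
  set p : (ℤ → Bool) × unitInterval := (ω', x') with hp
  have hpU' : p ∈ U := hAB ⟨hω'A, hx'B⟩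
  -- basic interval preservation facts
  have hsm₀' := symm_strictMono f₀ hsm₀
  have hsm₁' := symm_strictMono f₁ hsm₁
  have h₀0' : f₀.symm 0 = 0 := symm_fix f₀ h₀0
  have h₀1' : f₀.symm 1 = 1 := symm_fix f₀ h₀1
  have h₁0' : f₁.symm 0 = 0 := symm_fix f₁ h₁0
  have h₁1' : f₁.symm 1 = 1 := symm_fix f₁ h₁1
  have hfwd : ∀ n, 0 < fwd f₀ f₁ ω' x' n ∧ fwd f₀ f₁ ω' x' n < 1 := by
    intro n; induction n with
    | zero => exact ⟨hx'0, hx'1⟩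
    | succ n ih =>
      have e : fwd f₀ f₁ ω' x' (n+1)
          = if ω' (n : ℤ) = true then f₁ (fwd f₀ f₁ ω' x' n) else f₀ (fwd f₀ f₁ ω' x' n) := rfl
      rw [e]
      by_cases hb : ω' (n : ℤ) = true
      · rw [if_pos hb]; exact map_mem_Ioo f₁ hsm₁ h₁0 h₁1 ih.1 ih.2
      · rw [if_neg hb]; exact map_mem_Ioo f₀ hsm₀ h₀0 h₀1 ih.1 ih.2
  have hbwd : ∀ n, 0 < bwd f₀ f₁ ω' x' n ∧ bwd f₀ f₁ ω' x' n < 1 := by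
    intro n; induction n with
    | zero => exact ⟨hx'0, hx'1⟩
    | succ n ih =>
      have e : bwd f₀ f₁ ω' x' (n+1)
          = if ω' (-((n : ℤ)+1)) = true then f₁.symm (bwd f₀ f₁ ω' x' n)
            else f₀.symm (bwd f₀ f₁ ω' x' n) := rfl
      rw [e]
      by_cases hb : ω' (-((n : ℤ)+1)) = true
      · rw [if_pos hb]; exact map_mem_Ioo f₁.symm hsm₁' h₁0' h₁1' ih.1 ih.2
      · rw [if_neg hb]; exact map_mem_Ioo f₀.symm hsm₀' h₀0' h₀1' ih.1 ih.2
  -- tails of the orbits are pure f₀ / f₀⁻¹ orbits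
  have hfwd_tail : ∀ k, fwd f₀ f₁ ω' x' (M + k) = f₀^[k] (fwd f₀ f₁ ω' x' M) := by
    intro k; induction k with
    | zero => simp
    | succ k ih =>
      have hfalse : ω' ((M + k : ℕ) : ℤ) = false := hω'tail _ (by omega)
      show (if ω' ((M + k : ℕ) : ℤ) = true then f₁ _ else f₀ _) = _
      rw [hfalse]
      simp only [Bool.false_eq_true, if_false]
      rw [Function.iterate_succ_apply' f₀]
      exact congrArg f₀ ih
  have hbwd_tail : ∀ k, bwd f₀ f₁ ω' x' (M + k) = (f₀.symm)^[k] (bwd f₀ f₁ ω' x' M) := by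
    intro k; induction k with
    | zero => simp
    | succ k ih =>
      have hfalse : ω' (-(((M + k : ℕ) : ℤ) + 1)) = false := hω'tail _ (by omega)
      show (if ω' (-(((M + k : ℕ) : ℤ)+1)) = true then f₁.symm _ else f₀.symm _) = _
      rw [hfalse]
      simp only [Bool.false_eq_true, if_false]
      rw [Function.iterate_succ_apply' f₀.symm]
      exact congrArg f₀.symm ih
  -- f₀.symm pushes interior points up
  have h₀x' : ∀ x : unitInterval, 0 < x → x < 1 → x < f₀.symm x := by
    intro z hz0 hz1
    have h := map_mem_Ioo f₀.symm hsm₀' h₀0' h₀1' hz0 hz1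
    have := h₀x (f₀.symm z) h.1 h.2
    rwa [f₀.apply_symm_apply] at this
  -- p is not in LambdaR
  have hnotR : p ∉ LambdaR f₀ f₁ r := by
    obtain ⟨k, hk⟩ := escape_down f₀ h₀0 h₀x (fwd f₀ f₁ ω' x' M) r (hfwd M).2 (hl.trans hlr)
    intro hmem
    have h1 : p ∈ (skewF f₀ f₁)^[M + k] ⁻¹' (Set.univ ×ˢ Set.Icc r 1) :=
      Set.mem_iInter.mp hmem (M + k)
    rw [Set.mem_preimage, iterF] at h1
    have h2 : r ≤ fwd f₀ f₁ ω' x' (M + k) := h1.2.1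
    rw [hfwd_tail k] at h2
    exact absurd h2 (not_le.mpr hk)
  -- p is not in LambdaL
  have hnotL : p ∉ LambdaL f₀ f₁ l := by
    obtain ⟨k, hk⟩ := escape_up f₀.symm h₀1' h₀x' (bwd f₀ f₁ ω' x' M) l (hbwd M).1 (hlr.trans hr)
    intro hmem
    have h1 : p ∈ (skewF f₀ f₁)^[M + k] '' (Set.univ ×ˢ Set.Icc 0 l) :=
      Set.mem_iInter.mp hmem (M + k)
    rw [mem_image_iterF, iterG] at h1
    have h2 : bwd f₀ f₁ ω' x' (M + k) ≤ l := h1.2.2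
    rw [hbwd_tail k] at h2
    exact absurd h2 (not_le.mpr hk)
  exact ⟨p, hpU', by simp [hnotL, hnotR]⟩

end
end
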